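/- Let S = ℂ[u₁, u₂, w₁, w₂]/(u₁w₂ − u₂w₁), graded by total degree of the standard grading on the polynomial ring (the ideal is homogeneous, so S is graded). Then for every natural number d, the degree-d homogeneous component of S is a ℂ-vector space of dimension (d+1)². -/

import Mathlib

noncomputable section

open MvPolynomial

/-- The (homogeneous) ideal of the undeformed conifold `u₁w₂ − u₂w₁ = 0` in
`ℂ[u₁, u₂, w₁, w₂] = MvPolynomial (Fin 4) ℂ`, with `u₁ = X 0`, `u₂ = X 1`,
`w₁ = X 2`, `w₂ = X 3`. -/
def conifoldIdeal : Ideal (MvPolynomial (Fin 4) ℂ) :=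
  Ideal.span {(X 0 : MvPolynomial (Fin 4) ℂ) * X 3 - X 1 * X 2}

/-- The coordinate ring `S = ℂ[u₁, u₂, w₁, w₂]/(u₁w₂ − u₂w₁)` of the conifold. -/
abbrev ConifoldCoordRing : Type := MvPolynomial (Fin 4) ℂ ⧸ conifoldIdeal

/-- The degree-`d` homogeneous component of the graded ring
`S = ℂ[u₁, u₂, w₁, w₂]/(u₁w₂ − u₂w₁)` (the ideal being homogeneous, this is the image
in `S` of the space of degree-`d` homogeneous polynomials). -/
def conifoldComponent (d : ℕ) : Submodule ℂ ConifoldCoordRing :=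
  Submodule.map (Ideal.Quotient.mkₐ ℂ conifoldIdeal).toLinearMap
    (homogeneousSubmodule (Fin 4) ℂ d)

/-! Multiplication by the quadric `q = u₁w₂ − u₂w₁`, homogeneous of degree 2 and a
non-zero-divisor, maps the degree-`(d-2)` polynomials isomorphically onto the kernel of the
quotient map in degree `d`; hence `dim S_d = C(d+3,3) − C(d+1,3) = (d+1)²`. -/

namespace MvPolynomial

section

attribute [local instance] MvPolynomial.gradedAlgebra

theorem homogeneousComponent_mul_of_isHomogeneous_left {σ R : Type*} [CommSemiring R]
    {q : MvPolynomial σ R} {k : ℕ} (hq : q.IsHomogeneous k) (f : MvPolynomial σ R) (n : ℕ) :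
    homogeneousComponent n (q * f) = if k ≤ n then q * homogeneousComponent (n - k) f else 0 := by
  simp only [← decomposition.decompose'_apply]
  exact DirectSum.coe_decompose_mul_of_left_mem (homogeneousSubmodule σ R) n hq

end

theorem finrank_homogeneousSubmodule (σ K : Type*) [Fintype σ] [Field K] (n : ℕ) :
    Module.finrank K (homogeneousSubmodule σ K n) = (Fintype.card σ + n - 1).choose n := by
  classical
  have hdeg : {d : σ →₀ ℕ | d.degree = n} = ↑((Finset.univ : Finset σ).finsuppAntidiag n) := by
    ext d
    simp [Finsupp.degree_eq_sum]
  rw [homogeneousSubmodule_eq_finsupp_supported, hdeg,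
    (AddMonoidAlgebra.supportedEquivFinsupp _).finrank_eq, Module.finrank_finsupp_self]
  simp [Finset.card_finsuppAntidiag_nat_eq_choose]

section Quotient

variable {σ K : Type*} [Field K] {q : MvPolynomial σ K} {k : ℕ}

theorem ker_mk_domRestrict_homogeneousSubmodule_of_lt (hq : q.IsHomogeneous k) {n : ℕ}
    (hn : n < k) :
    LinearMap.ker ((Ideal.Quotient.mkₐ K (Ideal.span {q})).toLinearMap.domRestrict
      (homogeneousSubmodule σ K n)) = ⊥ := by
  refine (Submodule.eq_bot_iff _).mpr fun ⟨p, hp⟩ hpq ↦ Subtype.ext ?_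
  obtain ⟨c, rfl⟩ := Ideal.mem_span_singleton.mp (Ideal.Quotient.eq_zero_iff_mem.mp hpq)
  change q * c = 0
  rw [← homogeneousComponent_eq_self hp, homogeneousComponent_mul_of_isHomogeneous_left hq,
    if_neg hn.not_ge]

theorem ker_mk_domRestrict_homogeneousSubmodule_add (hq : q.IsHomogeneous k) (n : ℕ) :
    LinearMap.ker ((Ideal.Quotient.mkₐ K (Ideal.span {q})).toLinearMap.domRestrict
      (homogeneousSubmodule σ K (n + k))) =
      (Submodule.map (LinearMap.mulLeft K q) (homogeneousSubmodule σ K n)).comap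
        (homogeneousSubmodule σ K (n + k)).subtype := by
  ext ⟨p, hp⟩
  simp only [LinearMap.mem_ker, LinearMap.domRestrict_apply, AlgHom.toLinearMap_apply,
    Ideal.Quotient.mkₐ_eq_mk, Ideal.Quotient.eq_zero_iff_mem, Ideal.mem_span_singleton,
    Submodule.mem_comap, Submodule.subtype_apply, Submodule.mem_map, LinearMap.mulLeft_apply]
  constructor
  · rintro ⟨c, rfl⟩
    refine ⟨homogeneousComponent n c, homogeneousComponent_mem n c, ?_⟩
    rw [← homogeneousComponent_eq_self hp, homogeneousComponent_mul_of_isHomogeneous_left hq,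
      if_pos (Nat.le_add_left k n), Nat.add_sub_cancel]
  · rintro ⟨f, -, rfl⟩
    exact dvd_mul_right q f

theorem finrank_map_mk_homogeneousSubmodule_of_lt (hq : q.IsHomogeneous k) {n : ℕ} (hn : n < k) :
    Module.finrank K (Submodule.map (Ideal.Quotient.mkₐ K (Ideal.span {q})).toLinearMap
      (homogeneousSubmodule σ K n)) = Module.finrank K (homogeneousSubmodule σ K n) := by
  rw [← LinearMap.range_domRestrict]
  exact LinearMap.finrank_range_of_inj (LinearMap.ker_eq_bot.mp
    (ker_mk_domRestrict_homogeneousSubmodule_of_lt hq hn))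

instance [Finite σ] (n : ℕ) : Module.Finite K (homogeneousSubmodule σ K n) :=
  Module.Finite.iff_fg.mpr (homogeneousSubmodule_fg σ K n)

theorem finrank_map_mk_homogeneousSubmodule_add_finrank [Finite σ] (hq : q.IsHomogeneous k)
    (hq0 : q ≠ 0) (n : ℕ) :
    Module.finrank K (Submodule.map (Ideal.Quotient.mkₐ K (Ideal.span {q})).toLinearMap
      (homogeneousSubmodule σ K (n + k))) + Module.finrank K (homogeneousSubmodule σ K n) =
      Module.finrank K (homogeneousSubmodule σ K (n + k)) := by
  have hmul : Submodule.map (LinearMap.mulLeft K q) (homogeneousSubmodule σ K n) ≤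
      homogeneousSubmodule σ K (n + k) := by
    rintro _ ⟨f, hf, rfl⟩
    simpa [add_comm] using hq.mul hf
  have hrank := LinearMap.finrank_range_add_finrank_ker
    ((Ideal.Quotient.mkₐ K (Ideal.span {q})).toLinearMap.domRestrict
      (homogeneousSubmodule σ K (n + k)))
  rwa [LinearMap.range_domRestrict, ker_mk_domRestrict_homogeneousSubmodule_add hq,
    (Submodule.comapSubtypeEquivOfLe hmul).finrank_eq,
    ← (Submodule.equivMapOfInjective (LinearMap.mulLeft K q) (mul_right_injective₀ hq0)
      _).finrank_eq] at hrank

end Quotient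

end MvPolynomial

theorem Nat.choose_three_add_two (m : ℕ) : (m + 2).choose 3 = m.choose 3 + m ^ 2 := by
  induction m with
  | zero => rfl
  | succ m ih =>
    rw [Nat.choose_succ_succ' (m + 2), ih, Nat.choose_succ_succ' m,
      Nat.choose_succ_succ' (m + 1) 1, Nat.choose_succ_succ' m 1]
    simp only [Nat.choose_one_right]
    ring

/-- For every `d`, the degree-`d` homogeneous component of the coordinate ring of the
conifold `u₁w₂ − u₂w₁ = 0` has complex dimension `(d+1)²`, realizing the decomposition
`𝒪(Z) = ⊕_{m ≥ 1} (spin (m−1)/2, spin (m−1)/2)` under `SU(2)_R × SL₂`. -/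
theorem conifoldComponent_finrank (d : ℕ) :
    Module.finrank ℂ (conifoldComponent d) = (d + 1) ^ 2 := by
  have hq : (X 0 * X 3 - X 1 * X 2 : MvPolynomial (Fin 4) ℂ).IsHomogeneous 2 :=
    ((isHomogeneous_X _ _).mul (isHomogeneous_X _ _)).sub
      ((isHomogeneous_X _ _).mul (isHomogeneous_X _ _))
  have hq0 : (X 0 * X 3 - X 1 * X 2 : MvPolynomial (Fin 4) ℂ) ≠ 0 := fun h ↦ by
    simpa using congrArg (eval ![1, 0, 0, 1]) h
  have hdim (n : ℕ) : Module.finrank ℂ (homogeneousSubmodule (Fin 4) ℂ n) = (n + 3).choose 3 := by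
    rw [finrank_homogeneousSubmodule, Fintype.card_fin, show 4 + n - 1 = n + 3 by omega,
      Nat.choose_symm_add]
  rcases lt_or_ge d 2 with hd | hd
  · refine (finrank_map_mk_homogeneousSubmodule_of_lt hq hd).trans ?_
    rw [hdim]
    interval_cases d <;> rfl
  · obtain ⟨n, rfl⟩ := Nat.exists_eq_add_of_le' hd
    have hrank : Module.finrank ℂ (conifoldComponent (n + 2)) + _ = _ :=
      finrank_map_mk_homogeneousSubmodule_add_finrank hq hq0 n
    rw [hdim, hdim, show n + 2 + 3 = n + 3 + 2 by ring, Nat.choose_three_add_two (n + 3)] at hrank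
    rw [show n + 2 + 1 = n + 3 by ring]
    omega
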